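/- arXiv:2210.11838 — 2 statements merged into one kernel-verified Lean document; each statement's English description precedes it below -/
import Mathlib

section
/- If S is an LPDS of the king grid with partner map m, and v ∈ S is in a far pair (i.e., |N(v) ∩ N(m(v))| = 2, meaning v and m(v) are diagonal neighbors), then P(v) = N(v) \ N[m(v)] contains at least one vertex that is either in S or has at least 3 neighbors in S. -/
/-- The king grid on `ℤ × ℤ`: distinct vertices are adjacent iff both
coordinates differ by at most 1 (equivalently, Euclidean distance ≤ √2). -/
def kingGrid : SimpleGraph (ℤ × ℤ) where
  Adj u v := u ≠ v ∧ |u.1 - v.1| ≤ 1 ∧ |u.2 - v.2| ≤ 1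
  symm := ⟨by
    rintro u v ⟨h, h1, h2⟩
    refine ⟨h.symm, ?_, ?_⟩ <;> rw [abs_sub_comm] <;> assumption⟩
  loopless := ⟨fun v h => h.1 rfl⟩

/-- Open neighborhood in the king grid. -/
def N (v : ℤ × ℤ) : Set (ℤ × ℤ) := kingGrid.neighborSet v

/-- Closed neighborhood in the king grid. -/
def Ncl (v : ℤ × ℤ) : Set (ℤ × ℤ) := insert v (kingGrid.neighborSet v)

/-- `S` is a dominating set of the king grid. -/
def IsDominating (S : Set (ℤ × ℤ)) : Prop := ∀ u : ℤ × ℤ, (Ncl u ∩ S).Nonempty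

/-- `S` is locating: distinct vertices outside `S` have distinct neighborhoods in `S`. -/
def IsLocating (S : Set (ℤ × ℤ)) : Prop :=
  ∀ u v : ℤ × ℤ, u ∉ S → v ∉ S → u ≠ v → N u ∩ S ≠ N v ∩ S

/-- `m` is the partner map of a perfect matching of the induced subgraph on `S`. -/
def IsPartnerMap (S : Set (ℤ × ℤ)) (m : ℤ × ℤ → ℤ × ℤ) : Prop :=
  ∀ v ∈ S, m v ∈ S ∧ kingGrid.Adj v (m v) ∧ m (m v) = v

/-- `S` is a locating-paired-dominating set with matching partner map `m`. -/
def IsLPDS (S : Set (ℤ × ℤ)) (m : ℤ × ℤ → ℤ × ℤ) : Prop :=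
  IsDominating S ∧ IsLocating S ∧ IsPartnerMap S m

/-- Pendant neighbors of `v` (relative to the partner map `m`). -/
def P (m : ℤ × ℤ → ℤ × ℤ) (v : ℤ × ℤ) : Set (ℤ × ℤ) := N v \ Ncl (m v)

/-- Interval neighbors of `v` (relative to the partner map `m`). -/
def I (m : ℤ × ℤ → ℤ × ℤ) (v : ℤ × ℤ) : Set (ℤ × ℤ) := N v ∩ N (m v)

/-!
A far pair is diagonal, `m v = v + (e₁, e₂)` with `e₁, e₂ = ±1`, since two adjacent vertices
on a common row or column have three common neighbours. Then `P(v)` is the L-shaped set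
`v - (0, e₂)`, `v - (e₁, 0)`, `v - (e₁, e₂)`, `v + (-e₁, e₂)`, `v + (e₁, -e₂)`. Suppose none of
them lies in `S ∪ T₃`. The neighbourhood of `v - (0, e₂)` is covered by `v` and two other
vertices of `P(v)` adjacent to `v`, so a second `S`-neighbour of it would be shared with one of
them, and two vertices outside `S` with the same two `S`-neighbours contradict locating. Hence
`v` is its only `S`-neighbour, and likewise for `v - (e₁, 0)`: again a contradiction.
-/

lemma mem_N_iff {u x : ℤ × ℤ} : x ∈ N u ↔ (x.1 ≠ u.1 ∨ x.2 ≠ u.2) ∧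
    u.1 - 1 ≤ x.1 ∧ x.1 ≤ u.1 + 1 ∧ u.2 - 1 ≤ x.2 ∧ x.2 ≤ u.2 + 1 := by
  simp only [N, kingGrid, SimpleGraph.mem_neighborSet, ne_eq, Prod.ext_iff, abs_le]
  omega

lemma mem_Ncl_iff {u x : ℤ × ℤ} : x ∈ Ncl u ↔
    u.1 - 1 ≤ x.1 ∧ x.1 ≤ u.1 + 1 ∧ u.2 - 1 ≤ x.2 ∧ x.2 ≤ u.2 + 1 := by
  rw [Ncl, Set.mem_insert_iff, ← N, mem_N_iff, Prod.ext_iff]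
  omega

lemma finite_N (u : ℤ × ℤ) : (N u).Finite :=
  ((Set.finite_Icc (u.1 - 1) (u.1 + 1)).prod (Set.finite_Icc (u.2 - 1) (u.2 + 1))).subset
    fun x hx => by
      rw [mem_N_iff] at hx
      exact ⟨⟨hx.2.1, hx.2.2.1⟩, hx.2.2.2.1, hx.2.2.2.2⟩

lemma three_le_ncard_inter_N_of_aligned {v w : ℤ × ℤ} (hvw : w ∈ N v)
    (haligned : v.1 = w.1 ∨ v.2 = w.2) : 3 ≤ (N v ∩ N w).ncard := by
  rw [Nat.succ_le_iff, Set.two_lt_ncard_iff ((finite_N v).inter_of_left _)]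
  simp only [Set.mem_inter_iff, mem_N_iff] at hvw ⊢
  rcases haligned with h | h
  · exact ⟨(v.1 - 1, v.2), (v.1 + 1, v.2), (v.1 - 1, w.2),
      by simp only [ne_eq, Prod.ext_iff]; omega⟩
  · exact ⟨(v.1, v.2 - 1), (v.1, v.2 + 1), (w.1, v.2 - 1),
      by simp only [ne_eq, Prod.ext_iff]; omega⟩

lemma exists_diagonal_of_ncard_inter_N_eq_two {v w : ℤ × ℤ} (hvw : w ∈ N v)
    (hfar : (N v ∩ N w).ncard = 2) :
    ∃ e₁ e₂ : ℤ, (e₁ = 1 ∨ e₁ = -1) ∧ (e₂ = 1 ∨ e₂ = -1) ∧ w = (v.1 + e₁, v.2 + e₂) := by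
  have hdiag : v.1 ≠ w.1 ∧ v.2 ≠ w.2 := by
    by_contra! h
    have := three_le_ncard_inter_N_of_aligned hvw (by tauto)
    omega
  rw [mem_N_iff] at hvw
  exact ⟨w.1 - v.1, w.2 - v.2, by omega, by omega, by simp⟩

/-- The negation of `u ∈ S ∪ T₃`. -/
def IsLight (S : Set (ℤ × ℤ)) (u : ℤ × ℤ) : Prop := u ∉ S ∧ (N u ∩ S).ncard ≤ 2

namespace IsLocating

variable {S : Set (ℤ × ℤ)}

lemma eq_of_isLight_of_mem_N {u u' x y : ℤ × ℤ} (hS : IsLocating S)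
    (hu : IsLight S u) (hu' : IsLight S u') (hxy : x ≠ y) (hx : x ∈ S) (hy : y ∈ S)
    (hxu : x ∈ N u) (hyu : y ∈ N u) (hxu' : x ∈ N u') (hyu' : y ∈ N u') : u = u' := by
  have pair_eq (z : ℤ × ℤ) (hz : IsLight S z) (hxz : x ∈ N z) (hyz : y ∈ N z) :
      N z ∩ S = {x, y} := by
    have hsub : {x, y} ⊆ N z ∩ S :=
      Set.insert_subset ⟨hxz, hx⟩ (Set.singleton_subset_iff.2 ⟨hyz, hy⟩)
    exact (Set.eq_of_subset_of_ncard_le hsub (by rw [Set.ncard_pair hxy]; exact hz.2)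
      ((finite_N z).inter_of_left _)).symm
  by_contra hne
  exact hS u u' hu.1 hu'.1 hne ((pair_eq u hu hxu hyu).trans (pair_eq u' hu' hxu' hyu').symm)

lemma inter_N_eq_singleton_of_cover {x y z v : ℤ × ℤ} (hS : IsLocating S)
    (hx : IsLight S x) (hy : IsLight S y) (hz : IsLight S z) (hxy : x ≠ y) (hxz : x ≠ z)
    (hv : v ∈ S) (hvx : v ∈ N x) (hvy : v ∈ N y) (hvz : v ∈ N z)
    (hcover : ∀ s ∈ N x, s = v ∨ s = y ∨ s = z ∨ s ∈ N y ∨ s ∈ N z) : N x ∩ S = {v} := by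
  refine Set.eq_singleton_iff_unique_mem.2 ⟨⟨hvx, hv⟩, fun s ⟨hsx, hs⟩ => ?_⟩
  by_contra hsv
  rcases hcover s hsx with rfl | rfl | rfl | hsy | hsz
  · exact hsv rfl
  · exact hy.1 hs
  · exact hz.1 hs
  · exact hxy (hS.eq_of_isLight_of_mem_N hx hy (Ne.symm hsv) hv hs hvx hsx hvy hsy)
  · exact hxz (hS.eq_of_isLight_of_mem_N hx hz (Ne.symm hsv) hv hs hvx hsx hvz hsz)

lemma exists_not_isLight_of_diagonal (hS : IsLocating S) {v : ℤ × ℤ} (hv : v ∈ S) {e₁ e₂ : ℤ}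
    (he₁ : e₁ = 1 ∨ e₁ = -1) (he₂ : e₂ = 1 ∨ e₂ = -1) :
    ∃ u ∈ N v \ Ncl (v.1 + e₁, v.2 + e₂), ¬IsLight S u := by
  by_contra! hlight
  obtain ⟨a, b⟩ := v
  have light : ∀ u : ℤ × ℤ, u ∈ N (a, b) → u ∉ Ncl (a + e₁, b + e₂) → IsLight S u :=
    fun u h₁ h₂ => hlight u ⟨h₁, h₂⟩
  have h₁ : N (a, b - e₂) ∩ S = {(a, b)} := by
    refine hS.inter_N_eq_singleton_of_cover (y := (a - e₁, b - e₂)) (z := (a + e₁, b - e₂))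
      (light _ ?_ ?_) (light _ ?_ ?_) (light _ ?_ ?_) ?_ ?_ hv ?_ ?_ ?_ fun s => ?_
    all_goals simp only [mem_N_iff, mem_Ncl_iff, ne_eq, Prod.ext_iff]; omega
  have h₂ : N (a - e₁, b) ∩ S = {(a, b)} := by
    refine hS.inter_N_eq_singleton_of_cover (y := (a - e₁, b - e₂)) (z := (a - e₁, b + e₂))
      (light _ ?_ ?_) (light _ ?_ ?_) (light _ ?_ ?_) ?_ ?_ hv ?_ ?_ ?_ fun s => ?_
    all_goals simp only [mem_N_iff, mem_Ncl_iff, ne_eq, Prod.ext_iff]; omega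
  refine hS _ _ (light _ ?_ ?_).1 (light _ ?_ ?_).1 ?_ (h₁.trans h₂.symm)
  all_goals simp only [mem_N_iff, mem_Ncl_iff, ne_eq, Prod.ext_iff]; omega

end IsLocating

theorem lpds_far_pair_pendant (S : Set (ℤ × ℤ)) (m : ℤ × ℤ → ℤ × ℤ)
    (h : IsLPDS S m) (v : ℤ × ℤ) (hv : v ∈ S)
    (hfar : (N v ∩ N (m v)).ncard = 2) :
    ∃ u ∈ P m v, u ∈ S ∨ 3 ≤ (N u ∩ S).ncard := by
  obtain ⟨-, hloc, hpartner⟩ := h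
  obtain ⟨e₁, e₂, he₁, he₂, hm⟩ :=
    exists_diagonal_of_ncard_inter_N_eq_two (hpartner v hv).2.1 hfar
  obtain ⟨u, hu, hheavy⟩ := hloc.exists_not_isLight_of_diagonal hv he₁ he₂
  refine ⟨u, by rwa [P, hm], ?_⟩
  by_contra! hcon
  exact hheavy ⟨hcon.1, by omega⟩
end

section
/- If S is an LPDS of the king grid with partner map m, and v₁ = (a+1,b) and v₂ = (a−1,b) are both in S, suppose further that for i = 1,2: vᵢ is in a far pair, N(vᵢ) ∩ S = {m(vᵢ)}, and no pendant neighbor of vᵢ lies in ⋃_{w∈S} I(w). Then each of v₁ and v₂ has at least two pendant neighbors u ∉ S ∪ ⋃_{w∈S} I(w) with |N(u) ∩ S| ≥ 3. -/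
/-- The union of all interval neighborhoods. -/
def Iset (S : Set (ℤ × ℤ)) (m : ℤ × ℤ → ℤ × ℤ) : Set (ℤ × ℤ) := ⋃ w ∈ S, I m w

/-! The partner of `v₁ = (a + 1, b)` is not in column `a + 1`, since a vertical pair has more than
two common neighbours, nor in column `a`, since it would then be a second `S`-neighbour of `v₂`;
so it lies in column `a + 2`, and symmetrically `m v₂` lies in column `a - 2`. Hence the three
common neighbours `(a, b - 1), (a, b), (a, b + 1)` of `v₁` and `v₂` are pendant for both, lie
outside `S`, and all see `v₁` and `v₂`. Since `S` is locating, at most one of them sees nothing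
else in `S`. -/

lemma mem_N_iff_s15 {u v : ℤ × ℤ} : u ∈ N v ↔
    ¬(u.1 = v.1 ∧ u.2 = v.2) ∧ v.1 - u.1 ≤ 1 ∧ u.1 - v.1 ≤ 1 ∧ v.2 - u.2 ≤ 1 ∧ u.2 - v.2 ≤ 1 := by
  change v ≠ u ∧ |v.1 - u.1| ≤ 1 ∧ |v.2 - u.2| ≤ 1 ↔ _
  rw [abs_sub_le_iff, abs_sub_le_iff, ne_eq, Prod.ext_iff]
  omega

lemma mem_N_comm {u v : ℤ × ℤ} : u ∈ N v ↔ v ∈ N u := kingGrid.adj_comm v u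

lemma N_finite (v : ℤ × ℤ) : (N v).Finite := by
  refine (Set.finite_Icc (v.1 - 1, v.2 - 1) (v.1 + 1, v.2 + 1)).subset fun u hu => ?_
  rw [mem_N_iff_s15] at hu
  simp only [Set.mem_Icc, Prod.le_def]
  omega

lemma two_lt_ncard_N_inter_N_of_fst_eq {v w : ℤ × ℤ} (hw : w ∈ N v) (h : w.1 = v.1) :
    2 < (N v ∩ N w).ncard := by
  rw [mem_N_iff_s15] at hw
  refine (Set.two_lt_ncard ((N_finite v).inter_of_left _)).2
    ⟨(v.1 - 1, v.2), ?_, (v.1 + 1, v.2), ?_, (v.1 - 1, w.2), ?_, ?_, ?_, ?_⟩ <;>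
    simp only [Set.mem_inter_iff, mem_N_iff_s15, ne_eq, Prod.ext_iff] <;> omega

lemma two_lt_ncard_N_inter_N_of_snd_eq {v w : ℤ × ℤ} (h : w.2 = v.2) (hcol : |v.1 - w.1| = 2) :
    2 < (N v ∩ N w).ncard := by
  rw [abs_eq (by norm_num)] at hcol
  refine (Set.two_lt_ncard ((N_finite v).inter_of_left _)).2
    ⟨((v.1 + w.1) / 2, v.2 - 1), ?_, ((v.1 + w.1) / 2, v.2), ?_, ((v.1 + w.1) / 2, v.2 + 1), ?_,
      ?_, ?_, ?_⟩ <;>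
    simp only [Set.mem_inter_iff, mem_N_iff_s15, ne_eq, Prod.ext_iff] <;> omega

lemma IsPartnerMap.injOn {S : Set (ℤ × ℤ)} {m : ℤ × ℤ → ℤ × ℤ} (hP : IsPartnerMap S m) :
    Set.InjOn m S := fun v hv v' hv' h => by
  rw [← (hP v hv).2.2, h, (hP v' hv').2.2]

section PartnerPair

variable {S : Set (ℤ × ℤ)} {m : ℤ × ℤ → ℤ × ℤ} {v v' p : ℤ × ℤ}

lemma mem_P_of_mem_N_inter_N (hP : IsPartnerMap S m) (hv : v ∈ S) (hv' : v' ∈ S)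
    (hrow : v'.2 = v.2) (hcol : |v.1 - v'.1| = 2) (hfar : (N v ∩ N (m v)).ncard = 2)
    (hN' : N v' ∩ S = {m v'}) (hp : p ∈ N v ∩ N v') : p ∈ P m v := by
  obtain ⟨hmS, hadj, -⟩ := hP v hv
  have hmv : m v ∈ N v := hadj
  rw [abs_eq (by norm_num)] at hcol
  have hcol_ne : (m v).1 ≠ v.1 := fun h =>
    (two_lt_ncard_N_inter_N_of_fst_eq hmv h).ne' hfar
  have hcol_mid : (m v).1 ≠ (v.1 + v'.1) / 2 := fun h => by
    have hmv' : m v ∈ N v' ∩ S := ⟨by rw [mem_N_iff_s15] at hmv ⊢; omega, hmS⟩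
    rw [hN'] at hmv'
    have := hP.injOn hv hv' hmv'
    rw [this] at hcol
    omega
  refine ⟨hp.1, fun hcl => ?_⟩
  rw [Ncl, Set.mem_insert_iff] at hcl
  rw [mem_N_iff_s15] at hmv
  obtain ⟨hp1, hp2⟩ := hp
  rw [mem_N_iff_s15] at hp1 hp2
  rcases hcl with rfl | hcl
  · omega
  · change p ∈ N (m v) at hcl
    rw [mem_N_iff_s15] at hcl
    omega

lemma notMem_of_mem_N_inter_N (hP : IsPartnerMap S m) (hv : v ∈ S) (hv' : v' ∈ S)
    (hvv' : v ≠ v') (hN : N v ∩ S = {m v}) (hN' : N v' ∩ S = {m v'}) (hp : p ∈ N v ∩ N v') :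
    p ∉ S := fun hpS => by
  have h : p ∈ N v ∩ S := ⟨hp.1, hpS⟩
  have h' : p ∈ N v' ∩ S := ⟨hp.2, hpS⟩
  rw [hN] at h
  rw [hN'] at h'
  exact hvv' (hP.injOn hv hv' (h.symm.trans h'))

end PartnerPair

lemma IsLocating.exists_ne_three_le_ncard {S C : Set (ℤ × ℤ)} (hL : IsLocating S)
    {x y : ℤ × ℤ} (hxy : x ≠ y) (hC : ∀ u ∈ C, u ∉ S ∧ {x, y} ⊆ N u ∩ S) (hC3 : 2 < C.ncard) :
    ∃ p ∈ C, ∃ q ∈ C, p ≠ q ∧ 3 ≤ (N p ∩ S).ncard ∧ 3 ≤ (N q ∩ S).ncard := by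
  have hbig : ∀ u ∈ C, N u ∩ S ≠ {x, y} → 3 ≤ (N u ∩ S).ncard := fun u hu hne => by
    have := Set.ncard_lt_ncard ((hC u hu).2.ssubset_of_ne hne.symm)
      ((N_finite u).inter_of_left _)
    rwa [Set.ncard_pair hxy] at this
  have hsep : ∀ u ∈ C, ∀ u' ∈ C, u ≠ u' → N u ∩ S = {x, y} → N u' ∩ S ≠ {x, y} :=
    fun u hu u' hu' hne h h' => hL u u' (hC u hu).1 (hC u' hu').1 hne (h.trans h'.symm)
  obtain ⟨u₁, hu₁, u₂, hu₂, u₃, hu₃, h₁₂, h₁₃, h₂₃⟩ :=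
    (Set.two_lt_ncard (Set.finite_of_ncard_pos (by omega))).1 hC3
  by_cases h₁ : N u₁ ∩ S = {x, y}
  · exact ⟨u₂, hu₂, u₃, hu₃, h₂₃, hbig u₂ hu₂ (hsep u₁ hu₁ u₂ hu₂ h₁₂ h₁),
      hbig u₃ hu₃ (hsep u₁ hu₁ u₃ hu₃ h₁₃ h₁)⟩
  by_cases h₂ : N u₂ ∩ S = {x, y}
  · exact ⟨u₁, hu₁, u₃, hu₃, h₁₃, hbig u₁ hu₁ h₁, hbig u₃ hu₃ (hsep u₂ hu₂ u₃ hu₃ h₂₃ h₂)⟩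
  · exact ⟨u₁, hu₁, u₂, hu₂, h₁₂, hbig u₁ hu₁ h₁, hbig u₂ hu₂ h₂⟩

theorem claim_two_T3_pendants_general (S : Set (ℤ × ℤ)) (m : ℤ × ℤ → ℤ × ℤ)
    (h : IsLPDS S m) (a b : ℤ) (v1 v2 : ℤ × ℤ)
    (hv1 : v1 = (a + 1, b)) (hv2 : v2 = (a - 1, b))
    (hv1S : v1 ∈ S) (hv2S : v2 ∈ S)
    (hfar1 : (N v1 ∩ N (m v1)).ncard = 2) (hfar2 : (N v2 ∩ N (m v2)).ncard = 2)
    (hN1 : N v1 ∩ S = {m v1}) (hN2 : N v2 ∩ S = {m v2})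
    (hI1 : P m v1 ∩ Iset S m = ∅) :
    (∃ u1 ∈ P m v1, ∃ u2 ∈ P m v1, u1 ≠ u2 ∧
      u1 ∉ S ∧ u2 ∉ S ∧ u1 ∉ Iset S m ∧ u2 ∉ Iset S m ∧
      3 ≤ (N u1 ∩ S).ncard ∧ 3 ≤ (N u2 ∩ S).ncard) ∧
    (∃ u1 ∈ P m v2, ∃ u2 ∈ P m v2, u1 ≠ u2 ∧
      u1 ∉ S ∧ u2 ∉ S ∧ u1 ∉ Iset S m ∧ u2 ∉ Iset S m ∧
      3 ≤ (N u1 ∩ S).ncard ∧ 3 ≤ (N u2 ∩ S).ncard) := by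
  obtain ⟨-, hL, hP⟩ := h
  have hrow : v2.2 = v1.2 := by rw [hv1, hv2]
  have hcol : |v1.1 - v2.1| = 2 := by rw [hv1, hv2]; norm_num
  have hcol' : |v2.1 - v1.1| = 2 := by rw [abs_sub_comm, hcol]
  have hne : v1 ≠ v2 := by rw [hv1, hv2, ne_eq, Prod.ext_iff]; omega
  have hP1 : ∀ u ∈ N v1 ∩ N v2, u ∈ P m v1 :=
    fun u hu => mem_P_of_mem_N_inter_N hP hv1S hv2S hrow hcol hfar1 hN2 hu
  have hP2 : ∀ u ∈ N v1 ∩ N v2, u ∈ P m v2 := fun u hu =>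
    mem_P_of_mem_N_inter_N hP hv2S hv1S hrow.symm hcol' hfar2 hN1 (Set.inter_comm _ _ ▸ hu)
  have hC : ∀ u ∈ N v1 ∩ N v2, u ∉ S ∧ {v1, v2} ⊆ N u ∩ S := fun u hu =>
    ⟨notMem_of_mem_N_inter_N hP hv1S hv2S hne hN1 hN2 hu, Set.insert_subset
      ⟨mem_N_comm.1 hu.1, hv1S⟩ (Set.singleton_subset_iff.2 ⟨mem_N_comm.1 hu.2, hv2S⟩)⟩
  have hIset : ∀ u ∈ N v1 ∩ N v2, u ∉ Iset S m := fun u hu hI =>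
    (Set.eq_empty_iff_forall_notMem.1 hI1) u ⟨hP1 u hu, hI⟩
  obtain ⟨p, hp, q, hq, hpq, hp3, hq3⟩ := hL.exists_ne_three_le_ncard hne hC
    (two_lt_ncard_N_inter_N_of_snd_eq hrow hcol)
  exact ⟨⟨p, hP1 p hp, q, hP1 q hq, hpq, (hC p hp).1, (hC q hq).1, hIset p hp, hIset q hq,
      hp3, hq3⟩,
    ⟨p, hP2 p hp, q, hP2 q hq, hpq, (hC p hp).1, (hC q hq).1, hIset p hp, hIset q hq, hp3, hq3⟩⟩

theorem claim_two_T3_pendants (S : Set (ℤ × ℤ)) (m : ℤ × ℤ → ℤ × ℤ)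
    (h : IsLPDS S m) (a b : ℤ) (v1 v2 : ℤ × ℤ)
    (hv1 : v1 = (a + 1, b)) (hv2 : v2 = (a - 1, b))
    (hv1S : v1 ∈ S) (hv2S : v2 ∈ S)
    (hfar1 : (N v1 ∩ N (m v1)).ncard = 2) (hfar2 : (N v2 ∩ N (m v2)).ncard = 2)
    (hN1 : N v1 ∩ S = {m v1}) (hN2 : N v2 ∩ S = {m v2})
    (hI1 : P m v1 ∩ Iset S m = ∅) (hI2 : P m v2 ∩ Iset S m = ∅) :
    (∃ u1 ∈ P m v1, ∃ u2 ∈ P m v1, u1 ≠ u2 ∧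
      u1 ∉ S ∧ u2 ∉ S ∧ u1 ∉ Iset S m ∧ u2 ∉ Iset S m ∧
      3 ≤ (N u1 ∩ S).ncard ∧ 3 ≤ (N u2 ∩ S).ncard) ∧
    (∃ u1 ∈ P m v2, ∃ u2 ∈ P m v2, u1 ≠ u2 ∧
      u1 ∉ S ∧ u2 ∉ S ∧ u1 ∉ Iset S m ∧ u2 ∉ Iset S m ∧
      3 ≤ (N u1 ∩ S).ncard ∧ 3 ≤ (N u2 ∩ S).ncard) :=
  claim_two_T3_pendants_general S m h a b v1 v2 hv1 hv2 hv1S hv2S hfar1 hfar2 hN1 hN2 hI1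
end
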